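/- arXiv:2410.21833 — 3 statements merged into one kernel-verified Lean document; each statement's English description precedes it below -/
import Mathlib

section
/- Let P(x) = Σ_{i=0}^d a_i x^i be a univariate real polynomial of degree at most d such that |P(x)| ≤ 1 for all x ∈ [-1,1]. Then Σ_{i=0}^d |a_i| ≤ 4^d. -/
/-!
Expand `P = ∑ c k • T k` in the Chebyshev basis. The Chebyshev–Gauss quadrature on `d + 1`
nodes is exact up to degree `2d + 1`, so pairing `P` with `T k` at the nodes isolates `c k`;
as `|P| ≤ 1` and `|T k| ≤ 1` there, `|c 0| ≤ 1` and `|c k| ≤ 2` for `k ≥ 1`. The recurrence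
`T (k + 2) = 2 X T (k + 1) - T k` bounds the absolute coefficient sum of `T k` by `3 ^ (k - 1)`.
Hence `∑ |a i| ≤ 1 + ∑_{k=1}^d 2 * 3 ^ (k - 1) = 3 ^ d ≤ 4 ^ d`.
-/

open Polynomial Polynomial.Chebyshev Finset Real

noncomputable def sumAbsCoeff (p : ℝ[X]) : ℝ := p.sum fun _ a ↦ |a|

lemma sumAbsCoeff_eq_sum_range {p : ℝ[X]} {n : ℕ} (hn : p.natDegree < n) :
    sumAbsCoeff p = ∑ i ∈ range n, |p.coeff i| :=
  p.sum_over_range' (fun _ ↦ abs_zero) n hn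

lemma sumAbsCoeff_nonneg (p : ℝ[X]) : 0 ≤ sumAbsCoeff p :=
  sum_nonneg fun _ _ ↦ abs_nonneg _

lemma sumAbsCoeff_add_le (p q : ℝ[X]) :
    sumAbsCoeff (p + q) ≤ sumAbsCoeff p + sumAbsCoeff q := by
  set n := max (p + q).natDegree (max p.natDegree q.natDegree) + 1
  rw [sumAbsCoeff_eq_sum_range (n := n) (by omega), sumAbsCoeff_eq_sum_range (n := n) (by omega),
    sumAbsCoeff_eq_sum_range (n := n) (by omega), ← sum_add_distrib]
  exact sum_le_sum fun i _ ↦ by simpa only [coeff_add] using abs_add_le _ _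

@[simp]
lemma sumAbsCoeff_neg (p : ℝ[X]) : sumAbsCoeff (-p) = sumAbsCoeff p := by
  simp [sumAbsCoeff, Polynomial.sum_def]

lemma sumAbsCoeff_sub_le (p q : ℝ[X]) :
    sumAbsCoeff (p - q) ≤ sumAbsCoeff p + sumAbsCoeff q := by
  simpa [sub_eq_add_neg] using sumAbsCoeff_add_le p (-q)

lemma sumAbsCoeff_smul (c : ℝ) (p : ℝ[X]) : sumAbsCoeff (c • p) = |c| * sumAbsCoeff p := by
  rw [sumAbsCoeff, sum_smul_index _ _ _ fun _ ↦ abs_zero, sumAbsCoeff, Polynomial.sum,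
    Polynomial.sum, mul_sum]
  simp only [abs_mul]

lemma sumAbsCoeff_X_mul (p : ℝ[X]) : sumAbsCoeff (X * p) = sumAbsCoeff p := by
  rw [sumAbsCoeff_eq_sum_range (n := p.natDegree + 2) ?_, sum_range_succ',
    sumAbsCoeff_eq_sum_range (lt_add_one _)]
  · simp [coeff_X_mul]
  · grw [natDegree_mul_le, natDegree_X_le]
    omega

lemma sumAbsCoeff_sum_le {ι : Type*} (s : Finset ι) (f : ι → ℝ[X]) :
    sumAbsCoeff (∑ i ∈ s, f i) ≤ ∑ i ∈ s, sumAbsCoeff (f i) :=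
  le_sum_of_subadditive sumAbsCoeff (by simp [sumAbsCoeff]) sumAbsCoeff_add_le s f

lemma sumAbsCoeff_T_le (k : ℕ) : sumAbsCoeff (T ℝ k) ≤ 3 ^ (k - 1) := by
  induction k using Nat.twoStepInduction with
  | zero => simp [sumAbsCoeff_eq_sum_range (n := 1)]
  | one => simp [sumAbsCoeff]
  | more k ih₀ ih₁ =>
    have hrec : T ℝ ↑(k + 2) = (2 : ℝ) • (X * T ℝ ↑(k + 1)) - T ℝ k := by
      push_cast
      rw [T_add_two, smul_eq_C_mul, ← mul_assoc, ← C_ofNat]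
    calc sumAbsCoeff (T ℝ ↑(k + 2))
        ≤ 2 * sumAbsCoeff (T ℝ ↑(k + 1)) + sumAbsCoeff (T ℝ k) := by
          grw [hrec, sumAbsCoeff_sub_le, sumAbsCoeff_smul, sumAbsCoeff_X_mul, abs_two]
      _ ≤ 2 * 3 ^ k + 3 ^ (k - 1) := by gcongr; exact ih₁
      _ ≤ 3 ^ (k + 1) := by
          have : (3 : ℝ) ^ (k - 1) ≤ 3 ^ k := pow_le_pow_right₀ (by norm_num) (Nat.sub_le k 1)
          rw [pow_succ]; linarith

lemma exists_eq_sum_smul_T {P : ℝ[X]} {n : ℕ} (hP : P.degree ≤ n) :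
    ∃ c : ℕ → ℝ, P = ∑ j ∈ range (n + 1), c j • T ℝ j := by
  have hmem : P ∈ degreeLE ℝ n := mem_degreeLE.mpr hP
  rw [← Sequence.span_degreeLE (chebyshevTsequence ℝ) (by simp),
    show Set.Iic n = (range (n + 1) : Set ℕ) by ext; simp,
    Submodule.mem_span_image_finset_iff_exists_fun'] at hmem
  obtain ⟨c, hc⟩ := hmem
  exact ⟨c, hc.symm⟩

lemma abs_sumZeroes_le {n : ℕ} {Q : ℝ[X]}
    (hQ : ∀ x ∈ Set.Icc (-1 : ℝ) 1, |Q.eval x| ≤ 1) : |sumZeroes n Q| ≤ π := by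
  rcases eq_or_ne n 0 with rfl | hn
  · simp [sumZeroes, pi_pos.le]
  calc |sumZeroes n Q|
        = π / n * |∑ i ∈ range n, Q.eval (cos ((2 * i + 1) / (2 * n) * π))| := by
        rw [sumZeroes, abs_mul, abs_of_nonneg (by positivity)]
    _ ≤ π / n * ∑ _i ∈ range n, (1 : ℝ) := by
        gcongr
        exact (abs_sum_le_sum_abs _ _).trans
          (sum_le_sum fun i _ ↦ hQ _ ⟨neg_one_le_cos _, cos_le_one _⟩)
    _ = π := by simp [hn]

lemma sumZeroes_T_mul_T_eq_integral {n j k : ℕ} (hj : j < n) (hk : k < n) :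
    sumZeroes n (T ℝ j * T ℝ k) = ∫ x, (T ℝ j).eval x * (T ℝ k).eval x ∂measureT := by
  simp_rw [← eval_mul]
  refine (integral_eq_sumZeroes (by omega) ?_).symm
  rw [degree_mul, degree_T, degree_T]
  norm_cast
  omega

lemma sumZeroes_T_mul_T_of_ne {n j k : ℕ} (hj : j < n) (hk : k < n) (hjk : j ≠ k) :
    sumZeroes n (T ℝ j * T ℝ k) = 0 := by
  rw [sumZeroes_T_mul_T_eq_integral hj hk, integral_eval_T_real_mul_eval_T_real_measureT_of_ne hjk]

lemma sumZeroes_T_zero_mul_self {n : ℕ} (hn : n ≠ 0) :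
    sumZeroes n (T ℝ 0 * T ℝ 0) = π := by
  rw [T_zero, one_mul, ← T_zero ℝ, sumZeroes_T_zero hn]

lemma sumZeroes_T_mul_self {n k : ℕ} (hk : k < n) (hk₀ : k ≠ 0) :
    sumZeroes n (T ℝ k * T ℝ k) = π / 2 := by
  rw [sumZeroes_T_mul_T_eq_integral hk hk, integral_T_real_mul_self_measureT_of_ne_zero hk₀]

lemma sumZeroes_sum_smul_T_mul_T {n k : ℕ} (c : ℕ → ℝ) (hk : k < n) :
    sumZeroes n ((∑ j ∈ range n, c j • T ℝ j) * T ℝ k) =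
      c k * sumZeroes n (T ℝ k * T ℝ k) := by
  simp_rw [sum_mul, smul_mul_assoc, sumZeroes_sum, sumZeroes_smul]
  refine sum_eq_single_of_mem k (mem_range.mpr hk) fun j hj hjk ↦ ?_
  rw [sumZeroes_T_mul_T_of_ne (mem_range.mp hj) hk hjk, mul_zero]

lemma abs_mul_sumZeroes_T_mul_self_le {n k : ℕ} {c : ℕ → ℝ} (hk : k < n)
    (hP : ∀ x ∈ Set.Icc (-1 : ℝ) 1, |(∑ j ∈ range n, c j • T ℝ j).eval x| ≤ 1) :
    |c k| * sumZeroes n (T ℝ k * T ℝ k) ≤ π := by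
  have hnonneg : 0 ≤ sumZeroes n (T ℝ k * T ℝ k) := by
    rcases eq_or_ne k 0 with rfl | hk₀
    · rw [Nat.cast_zero, sumZeroes_T_zero_mul_self hk.ne']; positivity
    · rw [sumZeroes_T_mul_self hk hk₀]; positivity
  rw [← abs_of_nonneg hnonneg, ← abs_mul, ← sumZeroes_sum_smul_T_mul_T c hk]
  refine abs_sumZeroes_le fun x hx ↦ ?_
  rw [eval_mul, abs_mul]
  exact mul_le_one₀ (hP x hx) (abs_nonneg _) (abs_eval_T_real_le_one _ (abs_le.mpr hx))

theorem sumAbsCoeff_le_three_pow {P : ℝ[X]} {d : ℕ} (hdeg : P.degree ≤ d)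
    (hP : ∀ x ∈ Set.Icc (-1 : ℝ) 1, |P.eval x| ≤ 1) : sumAbsCoeff P ≤ 3 ^ d := by
  obtain ⟨c, rfl⟩ := exists_eq_sum_smul_T hdeg
  have hc₀ : |c 0| ≤ 1 := by
    have h := abs_mul_sumZeroes_T_mul_self_le d.succ_pos hP
    rw [Nat.cast_zero, sumZeroes_T_zero_mul_self d.succ_ne_zero] at h
    exact (mul_le_iff_le_one_left pi_pos).mp h
  have hc : ∀ k < d, |c (k + 1)| ≤ 2 := fun k hk ↦ by
    have h := abs_mul_sumZeroes_T_mul_self_le (by omega : k + 1 < d + 1) hP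
    rw [sumZeroes_T_mul_self (by omega) k.succ_ne_zero] at h
    nlinarith [pi_pos]
  calc sumAbsCoeff (∑ j ∈ range (d + 1), c j • T ℝ j)
      ≤ ∑ j ∈ range (d + 1), |c j| * sumAbsCoeff (T ℝ j) :=
        (sumAbsCoeff_sum_le _ _).trans_eq (sum_congr rfl fun j _ ↦ sumAbsCoeff_smul _ _)
    _ = ∑ k ∈ range d, |c (k + 1)| * sumAbsCoeff (T ℝ ↑(k + 1)) +
          |c 0| * sumAbsCoeff (T ℝ ↑0) :=
        sum_range_succ' _ _
    _ ≤ ∑ k ∈ range d, 2 * 3 ^ k + 1 * 1 := by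
        gcongr with k hk
        · exact sumAbsCoeff_nonneg _
        · exact hc k (mem_range.mp hk)
        · exact sumAbsCoeff_T_le (k + 1)
        · exact sumAbsCoeff_nonneg _
        · exact sumAbsCoeff_T_le 0
    _ = 3 ^ d := by
        rw [← mul_sum, geom_sum_eq (by norm_num)]
        ring

/-- **Sherstov's coefficient bound.** If `P(x) = ∑_{i=0}^d a_i x^i` is a real polynomial
with `|P(x)| ≤ 1` for all `x ∈ [-1,1]`, then `∑_{i=0}^d |a_i| ≤ 4^d`. -/
theorem coeff_bound_of_bounded_on_interval
    (d : ℕ) (a : Fin (d + 1) → ℝ)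
    (hP : ∀ x ∈ Set.Icc (-1 : ℝ) 1, |∑ i : Fin (d + 1), a i * x ^ (i : ℕ)| ≤ 1) :
    ∑ i : Fin (d + 1), |a i| ≤ 4 ^ d := by
  have hdeg : (ofFn (d + 1) a).natDegree < d + 1 := ofFn_natDegree_lt d.succ_pos a
  have heval (x : ℝ) : (ofFn (d + 1) a).eval x = ∑ i : Fin (d + 1), a i * x ^ (i : ℕ) := by
    simp [ofFn_eq_sum_monomial, eval_finsetSum]
  calc ∑ i : Fin (d + 1), |a i| = sumAbsCoeff (ofFn (d + 1) a) := by
        rw [sumAbsCoeff_eq_sum_range hdeg, ← Fin.sum_univ_eq_sum_range]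
        exact sum_congr rfl fun i _ ↦ by rw [ofFn_coeff_eq_val_of_lt a i.isLt]
    _ ≤ 3 ^ d := sumAbsCoeff_le_three_pow (degree_le_of_natDegree_le (by omega))
        fun x hx ↦ heval x ▸ hP x hx
    _ ≤ 4 ^ d := by gcongr; norm_num
end

section
/- In the setting above (A = Σ A_i, ‖A_i‖ ≤ κ_i, Σκ_i = 1, x drawn from p(x)=κ_{x_1}···κ_{x_r}, X = ⟨ψ|A_{x_1}···A_{x_r}|φ⟩/p(x)), the second moment satisfies E[|X|²] ≤ 1, and hence Var(X) ≤ 1. -/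
/-!
Each sample satisfies `|X(x)| ≤ 1` (trivially where `p(x) = 0`, as then `X(x) = 0 / 0 = 0` in
Lean): the numerator is bounded by the spectral norm of `A_{x_1}⋯A_{x_r}`, which
submultiplicativity bounds by `κ_{x_1}⋯κ_{x_r} = p(x)`. Since `p` is a probability distribution
(`∑ₓ p(x) = (∑ᵢ κᵢ)^r = 1`), the second moment is at most `1`, and the variance is the second
moment minus `|E[X]|²`.
-/

open scoped Matrix

noncomputable def specNorm {N : ℕ} (A : Matrix (Fin N) (Fin N) ℂ) : ℝ :=
  ‖Matrix.toEuclideanCLM (𝕜 := ℂ) A‖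

open WithLp

theorem sum_mul_norm_sub_sum_smul_sq {α E : Type*} [Fintype α] [NormedAddCommGroup E]
    [InnerProductSpace ℝ E] (p : α → ℝ) (hp : ∑ a, p a = 1) (X : α → E) :
    ∑ a, p a * ‖X a - ∑ b, p b • X b‖ ^ 2 = ∑ a, p a * ‖X a‖ ^ 2 - ‖∑ b, p b • X b‖ ^ 2 := by
  set μ := ∑ b, p b • X b
  have hcross : ∑ a, p a * inner ℝ (X a) μ = ‖μ‖ ^ 2 := by
    rw [← real_inner_self_eq_norm_sq, sum_inner]
    simp only [real_inner_smul_left]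
  calc ∑ a, p a * ‖X a - μ‖ ^ 2
      = ∑ a, p a * ‖X a‖ ^ 2 - 2 * ∑ a, p a * inner ℝ (X a) μ + (∑ a, p a) * ‖μ‖ ^ 2 := by
        simp_rw [norm_sub_sq_real, Finset.mul_sum, Finset.sum_mul, ← Finset.sum_sub_distrib,
          ← Finset.sum_add_distrib]
        exact Finset.sum_congr rfl fun a _ => by ring
    _ = ∑ a, p a * ‖X a‖ ^ 2 - ‖μ‖ ^ 2 := by rw [hcross, hp]; ring

theorem sum_mul_norm_sub_sum_smul_sq_le {α E : Type*} [Fintype α] [NormedAddCommGroup E]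
    [InnerProductSpace ℝ E] (p : α → ℝ) (hp : ∑ a, p a = 1) (X : α → E) :
    ∑ a, p a * ‖X a - ∑ b, p b • X b‖ ^ 2 ≤ ∑ a, p a * ‖X a‖ ^ 2 := by
  rw [sum_mul_norm_sub_sum_smul_sq p hp X]
  exact sub_le_self _ (sq_nonneg _)

theorem specNorm_nonneg {N : ℕ} (A : Matrix (Fin N) (Fin N) ℂ) : 0 ≤ specNorm A :=
  norm_nonneg _

theorem specNorm_list_prod_le {N : ℕ} (l : List (Matrix (Fin N) (Fin N) ℂ)) :
    specNorm l.prod ≤ (l.map specNorm).prod := by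
  rcases eq_or_ne l [] with rfl | hl
  · simp only [List.prod_nil, List.map_nil, specNorm, map_one]
    exact ContinuousLinearMap.norm_id_le
  · have hmap : l.map specNorm = (l.map (Matrix.toEuclideanCLM (𝕜 := ℂ))).map norm := by
      rw [List.map_map]; rfl
    rw [hmap, specNorm, map_list_prod]
    exact List.norm_prod_le' (by simpa using hl)

theorem specNorm_prod_ofFn_le {N r : ℕ} (M : Fin r → Matrix (Fin N) (Fin N) ℂ) :
    specNorm (List.ofFn M).prod ≤ ∏ i, specNorm (M i) := by
  simpa [List.map_ofFn, List.prod_ofFn] using specNorm_list_prod_le (List.ofFn M)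

theorem norm_toLp_eq_one {N : ℕ} {ψ : Fin N → ℂ} (hψ : star ψ ⬝ᵥ ψ = 1) :
    ‖toLp 2 ψ‖ = 1 := by
  have h : ‖toLp 2 ψ‖ ^ 2 = 1 := by
    rw [@norm_sq_eq_re_inner ℂ, EuclideanSpace.inner_toLp_toLp, dotProduct_comm, hψ, RCLike.one_re]
  exact (pow_eq_one_iff_of_nonneg (norm_nonneg _) two_ne_zero).mp h

theorem norm_star_dotProduct_mulVec_le {N : ℕ} (M : Matrix (Fin N) (Fin N) ℂ)
    {ψ φ : Fin N → ℂ} (hψ : star ψ ⬝ᵥ ψ = 1) (hφ : star φ ⬝ᵥ φ = 1) :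
    ‖star ψ ⬝ᵥ M *ᵥ φ‖ ≤ specNorm M := by
  have h : star ψ ⬝ᵥ M *ᵥ φ =
      inner ℂ (toLp 2 ψ) (Matrix.toEuclideanCLM (𝕜 := ℂ) M (toLp 2 φ)) := by
    rw [Matrix.toEuclideanCLM_toLp, EuclideanSpace.inner_toLp_toLp, dotProduct_comm]
  calc ‖star ψ ⬝ᵥ M *ᵥ φ‖
      ≤ ‖toLp 2 ψ‖ * (specNorm M * ‖toLp 2 φ‖) := by
        rw [h]
        exact (norm_inner_le_norm _ _).trans
          (mul_le_mul_of_nonneg_left (ContinuousLinearMap.le_opNorm _ _) (norm_nonneg _))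
    _ = specNorm M := by rw [norm_toLp_eq_one hψ, norm_toLp_eq_one hφ, one_mul, mul_one]

theorem importance_sampling_second_moment_general
    {N m : ℕ} (r : ℕ)
    (B : Fin m → Matrix (Fin N) (Fin N) ℂ) (κ : Fin m → ℝ)
    (hκnorm : ∀ i, specNorm (B i) ≤ κ i)
    (hκsum : ∑ i, κ i = 1)
    (ψ φ : Fin N → ℂ) (hψ : star ψ ⬝ᵥ ψ = 1) (hφ : star φ ⬝ᵥ φ = 1) :
    (∑ x : Fin r → Fin m,
        (∏ i, κ (x i)) *
          (‖(star ψ ⬝ᵥ ((List.ofFn fun i : Fin r => B (x i)).prod.mulVec φ)) /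
            ((∏ i, κ (x i) : ℝ) : ℂ)‖) ^ 2 ≤ 1) ∧
      (∑ x : Fin r → Fin m,
        (∏ i, κ (x i)) *
          (‖
            ((star ψ ⬝ᵥ ((List.ofFn fun i : Fin r => B (x i)).prod.mulVec φ)) /
                ((∏ i, κ (x i) : ℝ) : ℂ) -
              ∑ y : Fin r → Fin m,
                ((∏ i, κ (y i) : ℝ) : ℂ) *
                  ((star ψ ⬝ᵥ ((List.ofFn fun i : Fin r => B (y i)).prod.mulVec φ)) /
                    ((∏ i, κ (y i) : ℝ) : ℂ)))‖) ^ 2 ≤ 1) := by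
  set p : (Fin r → Fin m) → ℝ := fun x => ∏ i, κ (x i)
  set X : (Fin r → Fin m) → ℂ := fun x =>
    (star ψ ⬝ᵥ (List.ofFn fun i => B (x i)).prod *ᵥ φ) / (p x : ℂ)
  have hp_nonneg (x) : 0 ≤ p x :=
    Finset.prod_nonneg fun i _ => (specNorm_nonneg _).trans (hκnorm (x i))
  have hp_sum : ∑ x, p x = 1 := by rw [← Fintype.sum_pow, hκsum, one_pow]
  have hX (x) : ‖X x‖ ≤ 1 := by
    have hnum : ‖star ψ ⬝ᵥ (List.ofFn fun i => B (x i)).prod *ᵥ φ‖ ≤ p x :=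
      (norm_star_dotProduct_mulVec_le _ hψ hφ).trans <| (specNorm_prod_ofFn_le _).trans <|
        Finset.prod_le_prod (fun i _ => specNorm_nonneg _) fun i _ => hκnorm (x i)
    rw [norm_div, Complex.norm_real, Real.norm_of_nonneg (hp_nonneg x)]
    exact div_le_one_of_le₀ hnum (hp_nonneg x)
  have hsecond : ∑ x, p x * ‖X x‖ ^ 2 ≤ 1 := calc
    ∑ x, p x * ‖X x‖ ^ 2 ≤ ∑ x, p x := Finset.sum_le_sum fun x _ =>
      mul_le_of_le_one_right (hp_nonneg x) (pow_le_one₀ (norm_nonneg _) (hX x))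
    _ = 1 := hp_sum
  refine ⟨hsecond, ?_⟩
  simp only [← Complex.real_smul]
  exact (sum_mul_norm_sub_sum_smul_sq_le p hp_sum X).trans hsecond

/-- **Second moment bound for the importance-sampling estimator.** With `A = ∑ i, A i`,
`‖A i‖ ≤ κ i`, `∑ κ i = 1`, `p(x) = κ_{x_1}⋯κ_{x_r}`, and
`X(x) = ⟨ψ|A_{x_1}⋯A_{x_r}|φ⟩ / p(x)`, we have `E[|X|²] ≤ 1`, and hence `Var(X) ≤ 1`. -/
theorem importance_sampling_second_moment
    {N m : ℕ} (r : ℕ) (A : Matrix (Fin N) (Fin N) ℂ)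
    (B : Fin m → Matrix (Fin N) (Fin N) ℂ) (κ : Fin m → ℝ)
    (hκpos : ∀ i, 0 < κ i) (hκnorm : ∀ i, specNorm (B i) ≤ κ i)
    (hκsum : ∑ i, κ i = 1) (hA : A = ∑ i, B i)
    (ψ φ : Fin N → ℂ) (hψ : star ψ ⬝ᵥ ψ = 1) (hφ : star φ ⬝ᵥ φ = 1) :
    (∑ x : Fin r → Fin m,
        (∏ i, κ (x i)) *
          (‖(star ψ ⬝ᵥ ((List.ofFn fun i : Fin r => B (x i)).prod.mulVec φ)) /
            ((∏ i, κ (x i) : ℝ) : ℂ)‖) ^ 2 ≤ 1) ∧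
      (∑ x : Fin r → Fin m,
        (∏ i, κ (x i)) *
          (‖
            ((star ψ ⬝ᵥ ((List.ofFn fun i : Fin r => B (x i)).prod.mulVec φ)) /
                ((∏ i, κ (x i) : ℝ) : ℂ) -
              ∑ y : Fin r → Fin m,
                ((∏ i, κ (y i) : ℝ) : ℂ) *
                  ((star ψ ⬝ᵥ ((List.ofFn fun i : Fin r => B (y i)).prod.mulVec φ)) /
                    ((∏ i, κ (y i) : ℝ) : ℂ)))‖) ^ 2 ≤ 1) :=
  importance_sampling_second_moment_general r B κ hκnorm hκsum ψ φ hψ hφ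
end

section
/- Let P be a real polynomial of degree d with coefficients a_0,...,a_d satisfying |P(x)| ≤ 1 for x ∈ [−1,1]. Let A ∈ ℂ^{N×N} be Hermitian with ‖A‖ ≤ 1, |ψ⟩, |φ⟩ unit vectors, and suppose Ê_0,...,Ê_d ∈ ℂ satisfy |Ê_r − ⟨ψ|A^r|φ⟩| ≤ η/4^d for all r with a_r ≠ 0. Then |Σ_{r=0}^d a_r Ê_r − ⟨ψ|P(A)|φ⟩| ≤ η. -/
/-!
The error is at most `(∑ r, |a r|) * η / 4 ^ d`, so everything rests on Sherstov's bound
`∑ r, |a r| ≤ 4 ^ d`. For `P` of degree `≤ d`, `q(w) = w ^ d * P ((w + w⁻¹) / 2)` is a polynomial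
of degree `≤ 2 d`; on the unit circle `(w + w⁻¹) / 2 = Re w ∈ [-1, 1]`, so `|q| ≤ 1` there and, by
Parseval, every coefficient `b j` of `q` has `|b j| ≤ 1`. Averaging the expansions of
`P ((u + u⁻¹) / 2)` obtained from `q (u)` and `q (u⁻¹)` and using
`T k ((u + u⁻¹) / 2) = (u ^ k + u ^ (-k)) / 2` gives `P = ∑ j ≤ 2 d, b j * T (j - d)`.
Finally the recursion `T (k + 2) = 2 X T (k + 1) - T k` bounds the coefficient `ℓ¹` norms by
`‖T k‖₁ ≤ 4 ^ k` and `2 ‖T (k + 1)‖₁ ≤ 3 * 4 ^ k`, which add up to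
`∑ j ≤ 2 d, ‖T (j - d)‖₁ ≤ 4 ^ d`.
-/

open scoped Matrix

open Polynomial Polynomial.Chebyshev

namespace Polynomial

section l1Norm

variable {A : Type*} [SeminormedRing A]

noncomputable def l1Norm (p : A[X]) : ℝ := p.sum fun _ a => ‖a‖

theorem l1Norm_eq_sum_range {p : A[X]} {n : ℕ} (h : p.natDegree < n) :
    p.l1Norm = ∑ i ∈ Finset.range n, ‖p.coeff i‖ :=
  p.sum_over_range' (fun _ => norm_zero) n h

@[simp] theorem l1Norm_zero : (0 : A[X]).l1Norm = 0 := by simp [l1Norm]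

theorem l1Norm_nonneg (p : A[X]) : 0 ≤ p.l1Norm :=
  Finset.sum_nonneg fun _ _ => norm_nonneg _

theorem l1Norm_add_le (p q : A[X]) : (p + q).l1Norm ≤ p.l1Norm + q.l1Norm := by
  set n := max p.natDegree q.natDegree + 1
  rw [l1Norm_eq_sum_range (n := n) ((natDegree_add_le p q).trans_lt (Nat.lt_succ_self _)),
    l1Norm_eq_sum_range (n := n) (by omega), l1Norm_eq_sum_range (n := n) (by omega),
    ← Finset.sum_add_distrib]
  exact Finset.sum_le_sum fun i _ => by simpa only [coeff_add] using norm_add_le _ _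

@[simp] theorem l1Norm_neg (p : A[X]) : (-p).l1Norm = p.l1Norm := by
  rw [l1Norm_eq_sum_range (n := p.natDegree + 1) (by rw [natDegree_neg]; omega),
    l1Norm_eq_sum_range (Nat.lt_succ_self _)]
  simp only [coeff_neg, norm_neg]

theorem l1Norm_sub_le (p q : A[X]) : (p - q).l1Norm ≤ p.l1Norm + q.l1Norm := by
  simpa only [sub_eq_add_neg, l1Norm_neg] using l1Norm_add_le p (-q)

theorem l1Norm_sum_le {ι : Type*} (s : Finset ι) (f : ι → A[X]) :
    (∑ i ∈ s, f i).l1Norm ≤ ∑ i ∈ s, (f i).l1Norm :=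
  Finset.le_sum_of_subadditive l1Norm l1Norm_zero.le l1Norm_add_le s f

theorem l1Norm_C_mul_le (c : A) (p : A[X]) : (C c * p).l1Norm ≤ ‖c‖ * p.l1Norm := by
  rw [l1Norm_eq_sum_range ((natDegree_C_mul_le c p).trans_lt (Nat.lt_succ_self _)),
    l1Norm_eq_sum_range (Nat.lt_succ_self _), Finset.mul_sum]
  exact Finset.sum_le_sum fun i _ => by simpa only [coeff_C_mul] using norm_mul_le _ _

@[simp] theorem l1Norm_C (c : A) : (C c).l1Norm = ‖c‖ :=
  sum_C_index (by simp)

theorem l1Norm_X_mul (p : A[X]) : (X * p).l1Norm = p.l1Norm := by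
  have h : (X * p).natDegree < p.natDegree + 1 + 1 :=
    natDegree_mul_le.trans_lt (by linarith [natDegree_X_le (R := A)])
  rw [l1Norm_eq_sum_range h, l1Norm_eq_sum_range (Nat.lt_succ_self _), Finset.sum_range_succ']
  simp only [coeff_X_mul, coeff_X_mul_zero, norm_zero, add_zero]

@[simp] theorem l1Norm_one [NormOneClass A] : (1 : A[X]).l1Norm = 1 := by
  simpa using l1Norm_C (1 : A)

@[simp] theorem l1Norm_X [NormOneClass A] : (X : A[X]).l1Norm = 1 := by
  simpa using l1Norm_X_mul (1 : A[X])

theorem l1Norm_ofFn [DecidableEq A] {n : ℕ} (v : Fin n → A) :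
    (ofFn n v).l1Norm = ∑ i, ‖v i‖ := by
  rcases Nat.eq_zero_or_pos n with rfl | hn
  · simp
  rw [l1Norm_eq_sum_range (ofFn_natDegree_lt hn v), ← Fin.sum_univ_eq_sum_range]
  simp only [Fin.is_lt, ofFn_coeff_eq_val_of_lt, Fin.eta]

end l1Norm

theorem l1Norm_T_le (n : ℕ) :
    (T ℝ n).l1Norm ≤ 4 ^ n ∧ 2 * (T ℝ (n + 1)).l1Norm ≤ 3 * 4 ^ n := by
  induction n with
  | zero => norm_num
  | succ n ih =>
    have hrec : (T ℝ (n + 1 + 1)).l1Norm ≤ 2 * (T ℝ (n + 1)).l1Norm + (T ℝ n).l1Norm := by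
      rw [add_assoc, one_add_one_eq_two, T_add_two, mul_assoc, ← C_ofNat]
      refine (l1Norm_sub_le _ _).trans ?_
      gcongr
      exact (l1Norm_C_mul_le 2 _).trans_eq (by norm_num [l1Norm_X_mul])
    push_cast
    constructor <;> linarith [pow_succ (4 : ℝ) n, pow_nonneg (by norm_num : (0 : ℝ) ≤ 4) n]

theorem sum_l1Norm_T_le (d : ℕ) :
    ∑ j ∈ Finset.range (2 * d + 1), (T ℝ ((j : ℤ) - d)).l1Norm ≤ 4 ^ d := by
  induction d with
  | zero => simp
  | succ d ih =>
    rw [show 2 * (d + 1) + 1 = 2 * d + 1 + 1 + 1 by ring, Finset.sum_range_succ,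
      Finset.sum_range_succ']
    have hshift (j : ℕ) : ((j + 1 : ℕ) : ℤ) - ((d + 1 : ℕ) : ℤ) = (j : ℤ) - d := by push_cast; ring
    have hlast : ((2 * d + 1 : ℕ) : ℤ) - d = ((d + 1 : ℕ) : ℤ) := by push_cast; ring
    simp only [hshift, hlast, Nat.cast_zero, zero_sub, T_neg]
    push_cast
    linarith [(l1Norm_T_le d).2, pow_succ (4 : ℝ) d]

theorem norm_coeff_le_of_forall_norm_eval_le {q : ℂ[X]} {M : ℝ}
    (h : ∀ z : ℂ, ‖z‖ = 1 → ‖q.eval z‖ ≤ M) (i : ℕ) : ‖q.coeff i‖ ≤ M := by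
  have hM : 0 ≤ M := (norm_nonneg _).trans (h 1 norm_one)
  by_cases hi : i ∈ q.support
  · have hsq : ‖q.coeff i‖ ^ 2 ≤ M ^ 2 := calc
      ‖q.coeff i‖ ^ 2 ≤ ∑ k ∈ q.support, ‖q.coeff k‖ ^ 2 :=
        Finset.single_le_sum (f := fun k => ‖q.coeff k‖ ^ 2) (fun k _ => by positivity) hi
      _ = Real.circleAverage (fun z => ‖q.eval z‖ ^ 2) 0 1 :=
        q.sum_sq_norm_coeff_eq_circleAverage
      _ ≤ M ^ 2 := Real.circleAverage_mono_on_of_le_circle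
        (by fun_prop : Continuous fun z => ‖q.eval z‖ ^ 2).continuousOn.circleIntegrable'
        fun z hz => pow_le_pow_left₀ (norm_nonneg _) (h z (by simpa using hz)) 2
    exact (pow_le_pow_iff_left₀ (norm_nonneg _) hM two_ne_zero).1 hsq
  · rwa [notMem_support_iff.1 hi, norm_zero]

theorem Chebyshev.T_eval_half_add_inv {K : Type*} [Field K] [NeZero (2 : K)] (n : ℤ) {u : K}
    (hu : u ≠ 0) : (T K n).eval ((u + u⁻¹) / 2) = (u ^ n + u ^ (-n)) / 2 := by
  induction n using Polynomial.Chebyshev.induct' with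
  | zero => simp
  | one => simp
  | add_two n ih₁ ih₀ =>
    rw [T_add_two, eval_sub, eval_mul, eval_mul, eval_X, eval_ofNat, ih₁, ih₀]
    simp only [zpow_neg, zpow_add₀ hu, zpow_natCast, zpow_ofNat]
    field_simp
    ring
  | neg n ih => rw [T_neg, ih, neg_neg, add_comm]

/-- `w ^ d * p ((w + w⁻¹) / 2)` as a polynomial in `w`, when `natDegree p ≤ d`. -/
noncomputable def joukowski (d : ℕ) (p : ℝ[X]) : ℝ[X] :=
  ∑ i ∈ Finset.range (d + 1), C (p.coeff i / 2 ^ i) * (X ^ 2 + 1) ^ i * X ^ (d - i)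

theorem aeval_joukowski {K : Type*} [Field K] [Algebra ℝ K] {d : ℕ} {p : ℝ[X]}
    (hp : p.natDegree ≤ d) {u : K} (hu : u ≠ 0) :
    aeval u (joukowski d p) = u ^ d * aeval ((u + u⁻¹) / 2) p := by
  conv_rhs => rw [p.as_sum_range' (d + 1) (Nat.lt_succ_of_le hp)]
  simp only [joukowski, map_sum, Finset.mul_sum, aeval_monomial, map_mul, map_pow, aeval_C,
    aeval_X, map_add, map_one, map_div₀, map_ofNat]
  refine Finset.sum_congr rfl fun i hi => ?_
  rw [← pow_sub_mul_pow u (Nat.le_of_lt_succ (Finset.mem_range.1 hi))]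
  have key : u ^ i * ((u + u⁻¹) / 2) ^ i = (u ^ 2 + 1) ^ i / 2 ^ i := by
    rw [← mul_pow, ← div_pow]
    congr 1
    field_simp
  rw [mul_assoc (u ^ (d - i)), mul_left_comm (u ^ i), key]
  ring

theorem natDegree_joukowski_le (d : ℕ) (p : ℝ[X]) : (joukowski d p).natDegree ≤ 2 * d := by
  refine natDegree_sum_le_of_forall_le _ _ fun i hi => ?_
  have hi : i ≤ d := Nat.le_of_lt_succ (Finset.mem_range.1 hi)
  have h₁ : ((X ^ 2 + 1 : ℝ[X]) ^ i).natDegree ≤ i * 2 :=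
    natDegree_pow_le_of_le i (by compute_degree!)
  have h₂ := natDegree_X_pow_le (R := ℝ) (d - i)
  have h₃ := natDegree_C_mul_le (p.coeff i / 2 ^ i) ((X ^ 2 + 1) ^ i)
  have h₄ := natDegree_mul_le (p := C (p.coeff i / 2 ^ i) * (X ^ 2 + 1) ^ i) (q := X ^ (d - i))
  omega

theorem half_add_inv_eq_re {w : ℂ} (hw : ‖w‖ = 1) : (w + w⁻¹) / 2 = w.re := by
  rw [Complex.inv_def, Complex.normSq_eq_norm_sq, hw, one_pow, inv_one, Complex.ofReal_one,
    mul_one, Complex.add_conj]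
  push_cast
  ring

theorem abs_coeff_joukowski_le {d : ℕ} {p : ℝ[X]} (hp : p.natDegree ≤ d)
    (hP : ∀ x ∈ Set.Icc (-1 : ℝ) 1, |p.eval x| ≤ 1) (j : ℕ) : |(joukowski d p).coeff j| ≤ 1 := by
  have hw : ∀ w : ℂ, ‖w‖ = 1 → ‖((joukowski d p).map (algebraMap ℝ ℂ)).eval w‖ ≤ 1 := by
    intro w hw
    have hre : w.re ∈ Set.Icc (-1 : ℝ) 1 := abs_le.1 (hw ▸ Complex.abs_re_le_norm w)
    rw [eval_map_algebraMap, aeval_joukowski hp (norm_ne_zero_iff.1 (hw.trans_ne one_ne_zero)),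
      half_add_inv_eq_re hw, ← Complex.coe_algebraMap, aeval_algebraMap_apply, norm_mul,
      norm_pow, hw, one_pow, one_mul, coe_aeval_eq_eval, Complex.coe_algebraMap, Complex.norm_real,
      Real.norm_eq_abs]
    exact hP _ hre
  simpa using norm_coeff_le_of_forall_norm_eval_le hw j

theorem eval_half_add_inv_eq_sum_coeff_joukowski_mul_zpow {d : ℕ} {p : ℝ[X]}
    (hp : p.natDegree ≤ d) {u : ℝ} (hu : u ≠ 0) :
    p.eval ((u + u⁻¹) / 2) =
      ∑ j ∈ Finset.range (2 * d + 1), (joukowski d p).coeff j * u ^ ((j : ℤ) - d) := by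
  have h := aeval_joukowski hp hu
  rw [coe_aeval_eq_eval, coe_aeval_eq_eval,
    eval_eq_sum_range' ((natDegree_joukowski_le d p).trans_lt (Nat.lt_succ_self _))] at h
  simp only [zpow_sub₀ hu, zpow_natCast, ← mul_div_assoc, ← Finset.sum_div, h]
  field_simp

theorem exists_half_add_inv_eq {x : ℝ} (hx : 1 ≤ x) : ∃ u : ℝ, u ≠ 0 ∧ (u + u⁻¹) / 2 = x := by
  set s := √(x ^ 2 - 1)
  have hs : s ^ 2 = x ^ 2 - 1 := Real.sq_sqrt (by nlinarith)
  have hprod : (x + s) * (x - s) = 1 := by linear_combination -hs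
  refine ⟨x + s, left_ne_zero_of_mul_eq_one hprod, ?_⟩
  rw [inv_eq_of_mul_eq_one_right hprod]
  ring

theorem eq_sum_coeff_joukowski_mul_T {d : ℕ} {p : ℝ[X]} (hp : p.natDegree ≤ d) :
    p = ∑ j ∈ Finset.range (2 * d + 1), C ((joukowski d p).coeff j) * T ℝ ((j : ℤ) - d) := by
  refine eq_of_infinite_eval_eq _ _ ((Set.Ici_infinite 1).mono fun x hx => ?_)
  obtain ⟨u, hu, rfl⟩ := exists_half_add_inv_eq hx
  have h₁ := eval_half_add_inv_eq_sum_coeff_joukowski_mul_zpow hp hu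
  have h₂ := eval_half_add_inv_eq_sum_coeff_joukowski_mul_zpow hp (inv_ne_zero hu)
  rw [inv_inv, add_comm] at h₂
  simp only [inv_zpow'] at h₂
  simp only [Set.mem_ofPred_eq, eval_finsetSum, eval_mul, eval_C, T_eval_half_add_inv _ hu]
  conv_rhs =>
    simp only [mul_div_assoc', mul_add, add_div, Finset.sum_add_distrib, ← Finset.sum_div]
  linear_combination (h₁ + h₂) / 2

theorem l1Norm_le_four_pow_of_abs_eval_le_one {d : ℕ} {p : ℝ[X]} (hp : p.natDegree ≤ d)
    (hP : ∀ x ∈ Set.Icc (-1 : ℝ) 1, |p.eval x| ≤ 1) : p.l1Norm ≤ 4 ^ d := calc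
  p.l1Norm = (∑ j ∈ Finset.range (2 * d + 1),
      C ((joukowski d p).coeff j) * T ℝ ((j : ℤ) - d)).l1Norm :=
    congrArg l1Norm (eq_sum_coeff_joukowski_mul_T hp)
  _ ≤ ∑ j ∈ Finset.range (2 * d + 1), (C ((joukowski d p).coeff j) * T ℝ ((j : ℤ) - d)).l1Norm :=
    l1Norm_sum_le _ _
  _ ≤ ∑ j ∈ Finset.range (2 * d + 1), (T ℝ ((j : ℤ) - d)).l1Norm :=
    Finset.sum_le_sum fun j _ => (l1Norm_C_mul_le _ _).trans
      (mul_le_of_le_one_left (l1Norm_nonneg _) (abs_coeff_joukowski_le hp hP j))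
  _ ≤ 4 ^ d := sum_l1Norm_T_le d

end Polynomial

theorem norm_sum_mul_sub_sum_mul_le {ι : Type*} [Fintype ι] (a : ι → ℝ) (E v : ι → ℂ) {ε : ℝ}
    (h : ∀ i, a i ≠ 0 → ‖E i - v i‖ ≤ ε) :
    ‖∑ i, (a i : ℂ) * E i - ∑ i, (a i : ℂ) * v i‖ ≤ (∑ i, |a i|) * ε := by
  rw [← Finset.sum_sub_distrib, Finset.sum_mul]
  refine (norm_sum_le _ _).trans (Finset.sum_le_sum fun i _ => ?_)
  rw [← mul_sub, norm_mul, Complex.norm_real, Real.norm_eq_abs]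
  rcases eq_or_ne (a i) 0 with hi | hi
  · simp [hi]
  · exact mul_le_mul_of_nonneg_left (h i hi) (abs_nonneg _)

theorem polynomial_transformation_error_general
    {N : ℕ} (d : ℕ) (a : Fin (d + 1) → ℝ)
    (hP : ∀ x ∈ Set.Icc (-1 : ℝ) 1, |∑ i : Fin (d + 1), a i * x ^ (i : ℕ)| ≤ 1)
    (A : Matrix (Fin N) (Fin N) ℂ) (ψ φ : Fin N → ℂ)
    (E : Fin (d + 1) → ℂ) (η : ℝ) (hη : 0 ≤ η)
    (hE : ∀ r : Fin (d + 1), a r ≠ 0 →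
      ‖E r - star ψ ⬝ᵥ ((A ^ (r : ℕ)).mulVec φ)‖ ≤ η / 4 ^ d) :
    ‖∑ r : Fin (d + 1), (a r : ℂ) * E r -
          ∑ r : Fin (d + 1), (a r : ℂ) * (star ψ ⬝ᵥ ((A ^ (r : ℕ)).mulVec φ))‖ ≤ η := by
  have hdeg : (ofFn (d + 1) a).natDegree ≤ d := Nat.le_of_lt_succ (ofFn_natDegree_lt (by omega) a)
  have hbound : ∀ x ∈ Set.Icc (-1 : ℝ) 1, |(ofFn (d + 1) a).eval x| ≤ 1 := by
    simpa [ofFn_eq_sum_monomial, eval_finsetSum] using hP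
  have hsum : ∑ r, |a r| ≤ 4 ^ d := by
    simpa [l1Norm_ofFn] using l1Norm_le_four_pow_of_abs_eval_le_one hdeg hbound
  calc _ ≤ (∑ r, |a r|) * (η / 4 ^ d) := norm_sum_mul_sub_sum_mul_le a E _ hE
    _ ≤ 4 ^ d * (η / 4 ^ d) := by gcongr
    _ = η := by field_simp

/-- If `P(x) = ∑_r a_r x^r` satisfies `|P(x)| ≤ 1` on `[−1,1]`, `A` is Hermitian with
`‖A‖ ≤ 1`, and each `Ê r` approximates `⟨ψ|A^r|φ⟩` within `η/4^d` (whenever `a_r ≠ 0`),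
then `|∑_r a_r Ê_r − ⟨ψ|P(A)|φ⟩| ≤ η`, where `⟨ψ|P(A)|φ⟩ = ∑_r a_r ⟨ψ|A^r|φ⟩`. -/
theorem polynomial_transformation_error
    {N : ℕ} (d : ℕ) (a : Fin (d + 1) → ℝ)
    (hP : ∀ x ∈ Set.Icc (-1 : ℝ) 1, |∑ i : Fin (d + 1), a i * x ^ (i : ℕ)| ≤ 1)
    (A : Matrix (Fin N) (Fin N) ℂ) (hA : A.IsHermitian) (hAnorm : specNorm A ≤ 1)
    (ψ φ : Fin N → ℂ) (hψ : star ψ ⬝ᵥ ψ = 1) (hφ : star φ ⬝ᵥ φ = 1)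
    (E : Fin (d + 1) → ℂ) (η : ℝ) (hη : 0 ≤ η)
    (hE : ∀ r : Fin (d + 1), a r ≠ 0 →
      ‖E r - star ψ ⬝ᵥ ((A ^ (r : ℕ)).mulVec φ)‖ ≤ η / 4 ^ d) :
    ‖∑ r : Fin (d + 1), (a r : ℂ) * E r -
          ∑ r : Fin (d + 1), (a r : ℂ) * (star ψ ⬝ᵥ ((A ^ (r : ℕ)).mulVec φ))‖ ≤ η :=
  polynomial_transformation_error_general d a hP A ψ φ E η hη hE
end
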